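/- arXiv:quant-ph/0401061 — 7 statements merged into one kernel-verified Lean document; each statement's English description precedes it below -/
import Mathlib

section
/- Entanglement-frustration bound: Let H = H_L + H_I be Hermitian operators on a finite-dimensional Hilbert space with |E_0⟩ a unit ground state of H. Let E_0^L, E_0^I be the smallest eigenvalues of H_L, H_I, E_f = E_0 − E_0^L − E_0^I, and let Δ > 0. Let K be the span of the eigenvectors of H_L with eigenvalue strictly less than E_0^L + Δ, and P the orthogonal projection onto K. Then 1 − ‖P|E_0⟩‖² ≤ E_f/Δ. -/
open Module.End

local notation "⟪" x ", " y "⟫" => @inner ℂ _ _ x y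

/-- Lower bound on the quadratic form of a symmetric operator whose real eigenvalues
are all at least `c`. -/
lemma symm_quadform_lower_bound {E : Type*} [NormedAddCommGroup E] [InnerProductSpace ℂ E]
    [FiniteDimensional ℂ E] (A : E →ₗ[ℂ] E) (hA : A.IsSymmetric) (c : ℝ)
    (hc : ∀ μ : ℝ, Module.End.HasEigenvalue A (μ : ℂ) → c ≤ μ) (x : E) :
    c * ‖x‖ ^ 2 ≤ RCLike.re ⟪x, A x⟫ := by
  rcases eq_or_ne x 0 with rfl | hx
  · simp
  haveI : Nontrivial E := ⟨x, 0, hx⟩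
  have hev := hA.hasEigenvalue_iInf_of_finiteDimensional
  set r : ℝ := ⨅ y : {y : E // y ≠ 0}, RCLike.re ⟪A y, (y : E)⟫ / ‖(y : E)‖ ^ 2 with hr
  have hcr : c ≤ r := hc r hev
  set T := LinearMap.toContinuousLinearMap A with hT
  have hbdd : BddBelow (Set.range fun y : {y : E // y ≠ 0} =>
      RCLike.re ⟪A y, (y : E)⟫ / ‖(y : E)‖ ^ 2) := by
    refine ⟨-‖T‖, ?_⟩
    rintro _ ⟨y, rfl⟩
    have hy : (0 : ℝ) < ‖(y : E)‖ ^ 2 := pow_pos (norm_pos_iff.mpr y.2) 2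
    rw [le_div_iff₀ hy]
    have h1 : |RCLike.re ⟪A (y : E), (y : E)⟫| ≤ ‖⟪A (y : E), (y : E)⟫‖ :=
      RCLike.abs_re_le_norm _
    have h2 : ‖⟪A (y : E), (y : E)⟫‖ ≤ ‖A (y : E)‖ * ‖(y : E)‖ := norm_inner_le_norm _ _
    have h3 : ‖A (y : E)‖ ≤ ‖T‖ * ‖(y : E)‖ := by
      simpa [hT] using T.le_opNorm (y : E)
    nlinarith [neg_abs_le (RCLike.re ⟪A (y : E), (y : E)⟫), norm_nonneg (y : E),
      norm_nonneg (⟪A (y : E), (y : E)⟫)]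
  have hle : r ≤ RCLike.re ⟪A x, x⟫ / ‖x‖ ^ 2 := ciInf_le hbdd ⟨x, hx⟩
  have hx2 : (0 : ℝ) < ‖x‖ ^ 2 := pow_pos (norm_pos_iff.mpr hx) 2
  have hmul := (le_div_iff₀ hx2).mp (le_trans hcr hle)
  have hre : RCLike.re ⟪A x, x⟫ = RCLike.re ⟪x, A x⟫ := inner_re_symm (𝕜 := ℂ) _ _
  linarith [hre ▸ hmul]

/-- Entanglement-frustration bound: for a unit ground state `|E0⟩` of `H = H_L + H_I`,
with `K` the span of eigenvectors of `H_L` with eigenvalue `< E0L + Δ` and `P` the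
orthogonal projection onto `K`, we have `1 - ‖P|E0⟩‖² ≤ E_f/Δ`. -/
theorem entanglement_frustration_bound
    {E : Type*} [NormedAddCommGroup E] [InnerProductSpace ℂ E] [FiniteDimensional ℂ E]
    (H HL HI : E →ₗ[ℂ] E)
    (hH : H.IsSymmetric) (hHL : HL.IsSymmetric) (hHI : HI.IsSymmetric)
    (hsum : H = HL + HI)
    (E0 E0L E0I : ℝ)
    (hE0 : IsLeast {μ : ℝ | Module.End.HasEigenvalue H (μ : ℂ)} E0)
    (hE0L : IsLeast {μ : ℝ | Module.End.HasEigenvalue HL (μ : ℂ)} E0L)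
    (hE0I : IsLeast {μ : ℝ | Module.End.HasEigenvalue HI (μ : ℂ)} E0I)
    (v : E) (hv : ‖v‖ = 1) (hvE : H v = (E0 : ℂ) • v)
    (Δ : ℝ) (hΔ : 0 < Δ)
    (K : Submodule ℂ E)
    (hK : K = ⨆ (μ : ℝ) (_ : μ < E0L + Δ), Module.End.eigenspace HL (μ : ℂ)) :
    1 - ‖(K.orthogonalProjection v : E)‖ ^ 2 ≤ (E0 - E0L - E0I) / Δ := by
  classical
  -- `K` is invariant under `HL`
  have hinv : ∀ x ∈ K, HL x ∈ K := by
    have hle : K ≤ K.comap HL := by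
      conv_lhs => rw [hK]
      refine iSup₂_le fun μ hμ x hx => ?_
      have hxe : HL x = (μ : ℂ) • x := Module.End.mem_eigenspace_iff.mp hx
      simp only [Submodule.mem_comap]
      rw [hxe]
      refine Submodule.smul_mem _ _ ?_
      rw [hK]
      exact le_iSup₂ (f := fun (μ : ℝ) (_ : μ < E0L + Δ) =>
        Module.End.eigenspace HL (μ : ℂ)) μ hμ hx
    exact fun x hx => hle hx
  -- hence `Kᗮ` is invariant under `HL`
  have hinv' : ∀ y ∈ Kᗮ, HL y ∈ Kᗮ := by
    intro y hy
    rw [Submodule.mem_orthogonal]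
    intro u hu
    rw [← hHL u y]
    exact (Submodule.mem_orthogonal K y).mp hy _ (hinv u hu)
  -- restriction of `HL` to `Kᗮ`
  set A : Kᗮ →ₗ[ℂ] Kᗮ := HL.restrict hinv' with hA
  have hAsymm : A.IsSymmetric := by
    intro a b
    simpa only [hA, Submodule.coe_inner, LinearMap.restrict_coe_apply] using hHL a b
  -- eigenvalues of the restriction are ≥ E0L + Δ
  have hAeig : ∀ μ : ℝ, Module.End.HasEigenvalue A (μ : ℂ) → E0L + Δ ≤ μ := by
    intro μ hμ
    by_contra hlt
    push_neg at hlt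
    obtain ⟨x, hx⟩ := hμ.exists_hasEigenvector
    have hx0 : (x : E) ≠ 0 := fun h => hx.2 (Subtype.ext h)
    have hxe : HL (x : E) = (μ : ℂ) • (x : E) := by
      have h1 := Module.End.mem_eigenspace_iff.mp hx.1
      have h2 := congrArg (Subtype.val) h1
      simpa [hA, LinearMap.restrict_coe_apply] using h2
    have hxK : (x : E) ∈ K := by
      have hmem : (x : E) ∈ ⨆ (μ : ℝ) (_ : μ < E0L + Δ), Module.End.eigenspace HL (μ : ℂ) :=
        le_iSup₂ (f := fun (μ : ℝ) (_ : μ < E0L + Δ) =>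
          Module.End.eigenspace HL (μ : ℂ)) μ hlt (Module.End.mem_eigenspace_iff.mpr hxe)
      rwa [← hK] at hmem
    have : (x : E) = 0 := by
      have h0 := (Submodule.mem_orthogonal K (x : E)).mp x.2 _ hxK
      simpa [inner_self_eq_zero] using h0
    exact hx0 this
  -- decomposition v = p + w
  set p : E := (K.orthogonalProjection v : E) with hp
  set w : E := v - p with hw
  have hwK : w ∈ Kᗮ := Submodule.sub_starProjection_mem_orthogonal v
  have hpK : p ∈ K := (K.orthogonalProjection v).2
  have hvpw : v = p + w := by simp [hw]
  -- Pythagoras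
  have hpyth : ‖p‖ ^ 2 + ‖w‖ ^ 2 = 1 := by
    have h := Submodule.norm_sq_eq_add_norm_sq_projection v K
    rw [hv] at h
    have h1 : ‖p‖ = ‖K.orthogonalProjection v‖ := rfl
    have h2 : ‖w‖ = ‖Kᗮ.orthogonalProjection v‖ := by
      rw [show ‖Kᗮ.orthogonalProjection v‖ = ‖Kᗮ.starProjection v‖ from rfl,
        Submodule.starProjection_orthogonal_val]
      rfl
    rw [h1, h2]
    linarith
  -- bound on the w-part
  have hwbound : (E0L + Δ) * ‖w‖ ^ 2 ≤ RCLike.re ⟪w, HL w⟫ := by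
    have h := symm_quadform_lower_bound A hAsymm (E0L + Δ) hAeig ⟨w, hwK⟩
    simpa [hA, Submodule.coe_inner, LinearMap.restrict_coe_apply] using h
  -- bound on the p-part
  have hpbound : E0L * ‖p‖ ^ 2 ≤ RCLike.re ⟪p, HL p⟫ :=
    symm_quadform_lower_bound HL hHL E0L (fun μ h => hE0L.2 h) p
  -- bound for HI
  have hIbound : E0I * ‖v‖ ^ 2 ≤ RCLike.re ⟪v, HI v⟫ :=
    symm_quadform_lower_bound HI hHI E0I (fun μ h => hE0I.2 h) v
  -- cross terms vanish
  have hc1 : ⟪p, HL w⟫ = 0 :=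
    (Submodule.mem_orthogonal K (HL w)).mp (hinv' w hwK) p hpK
  have hc2 : ⟪w, HL p⟫ = 0 := by
    have h0 : ⟪HL p, w⟫ = 0 := (Submodule.mem_orthogonal K w).mp hwK _ (hinv p hpK)
    rw [← inner_conj_symm w (HL p), h0]
    simp
  -- expand ⟪v, HL v⟫
  have hexp : ⟪v, HL v⟫ = ⟪p, HL p⟫ + ⟪w, HL w⟫ := by
    conv_lhs => rw [hvpw, map_add, inner_add_left, inner_add_right, inner_add_right]
    rw [hc1, hc2]
    ring
  -- ground state energy
  have hE : RCLike.re ⟪v, H v⟫ = E0 := by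
    rw [hvE, inner_smul_right, inner_self_eq_norm_sq_to_K, hv]
    simp
  have hsplit : RCLike.re ⟪v, H v⟫ = RCLike.re ⟪v, HL v⟫ + RCLike.re ⟪v, HI v⟫ := by
    rw [hsum]
    simp [inner_add_right]
  have hLre : RCLike.re ⟪v, HL v⟫ = RCLike.re ⟪p, HL p⟫ + RCLike.re ⟪w, HL w⟫ := by
    rw [hexp]; simp
  rw [hv] at hIbound
  have hkey : Δ * ‖w‖ ^ 2 ≤ E0 - E0L - E0I := by
    have hE0Lsplit : E0L * ‖p‖ ^ 2 + E0L * ‖w‖ ^ 2 = E0L := by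
      rw [← mul_add, hpyth, mul_one]
    have hdist : (E0L + Δ) * ‖w‖ ^ 2 = E0L * ‖w‖ ^ 2 + Δ * ‖w‖ ^ 2 := by ring
    linarith [hwbound, hpbound, hIbound, hE0Lsplit, hdist]
  have hw2 : ‖w‖ ^ 2 = 1 - ‖p‖ ^ 2 := by linarith
  rw [le_div_iff₀ hΔ, ← hw2]
  linarith [hkey]
end

section
/- For the two-qubit transverse Ising Hamiltonian H = −g(σ_x⊗I + I⊗σ_x) − σ_z⊗σ_z with g ≥ 0, the smallest eigenvalue of H equals −√(1+4g²). -/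
open Kronecker

def e4 : Fin 4 ≃ Fin 2 × Fin 2 := (finProdFinEquiv (m := 2) (n := 2)).symm

/-- The two-qubit transverse Ising Hamiltonian
`H = -g(σx⊗I + I⊗σx) - σz⊗σz` (with `g ≥ 0`) has smallest eigenvalue `-√(1+4g²)`. -/
theorem ising_ground_energy (g : ℝ) (hg : 0 ≤ g)
    (σx σz : Matrix (Fin 2) (Fin 2) ℂ)
    (hσx : σx = !![0, 1; 1, 0]) (hσz : σz = !![1, 0; 0, -1])
    (H : Matrix (Fin 2 × Fin 2) (Fin 2 × Fin 2) ℂ)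
    (hH : H = (-(g : ℂ)) • (σx ⊗ₖ (1 : Matrix (Fin 2) (Fin 2) ℂ)
        + (1 : Matrix (Fin 2) (Fin 2) ℂ) ⊗ₖ σx) - σz ⊗ₖ σz) :
    IsLeast {μ : ℝ | (μ : ℂ) ∈ spectrum ℂ H} (-Real.sqrt (1 + 4 * g ^ 2)) := by
  subst hσx hσz hH
  have key : ∀ μ : ℂ, (μ ∈ spectrum ℂ ((-(g : ℂ)) • ((!![0, 1; 1, 0] : Matrix (Fin 2) (Fin 2) ℂ) ⊗ₖ (1 : Matrix (Fin 2) (Fin 2) ℂ)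
        + (1 : Matrix (Fin 2) (Fin 2) ℂ) ⊗ₖ !![0, 1; 1, 0])
        - (!![1, 0; 0, -1] : Matrix (Fin 2) (Fin 2) ℂ) ⊗ₖ !![1, 0; 0, -1]))
      ↔ (μ - 1) * (μ + 1) * (μ ^ 2 - (1 + 4 * (g:ℂ) ^ 2)) = 0 := by
    intro μ
    rw [spectrum.mem_iff, Matrix.isUnit_iff_isUnit_det, isUnit_iff_ne_zero, not_not,
      Algebra.algebraMap_eq_smul_one]
    set M := μ • (1 : Matrix (Fin 2 × Fin 2) (Fin 2 × Fin 2) ℂ) - _ with hM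
    have hsub : (M.submatrix e4 e4) = !![μ+1, (g:ℂ), (g:ℂ), 0; (g:ℂ), μ-1, 0, (g:ℂ);
        (g:ℂ), 0, μ-1, (g:ℂ); 0, (g:ℂ), (g:ℂ), μ+1] := by
      ext i j
      fin_cases i <;> fin_cases j <;>
        norm_num [hM, e4, finProdFinEquiv, Fin.divNat, Fin.modNat, Matrix.one_apply,
          Matrix.submatrix_apply, Prod.ext_iff, Fin.ext_iff]
    have hdet : M.det = (μ - 1) * (μ + 1) * (μ ^ 2 - (1 + 4 * (g:ℂ) ^ 2)) := by
      rw [← Matrix.det_submatrix_equiv_self e4 M, hsub]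
      simp [Matrix.det_succ_row_zero, Fin.sum_univ_succ, Fin.succAbove]
      ring
    rw [hdet]
  have hs : (0:ℝ) ≤ 1 + 4 * g ^ 2 := by positivity
  have hsq : Real.sqrt (1 + 4 * g ^ 2) ^ 2 = 1 + 4 * g ^ 2 := Real.sq_sqrt hs
  have hone : (1:ℝ) ≤ Real.sqrt (1 + 4 * g ^ 2) := by
    nlinarith [hsq, Real.sqrt_nonneg (1 + 4 * g ^ 2)]
  constructor
  · show ((-Real.sqrt (1 + 4 * g ^ 2) : ℝ) : ℂ) ∈ spectrum ℂ _
    rw [key]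
    apply mul_eq_zero_of_right
    push_cast
    rw [neg_pow, ← Complex.ofReal_pow, hsq]
    push_cast
    ring
  · rintro μ hμ
    rw [Set.mem_setOf_eq, key] at hμ
    rcases mul_eq_zero.1 hμ with h | h
    · rcases mul_eq_zero.1 h with h | h
      · have : μ = 1 := by exact_mod_cast sub_eq_zero.1 h
        linarith
      · have : μ = -1 := by
          have := eq_neg_of_add_eq_zero_left h
          exact_mod_cast this
        linarith
    · have hμ2 : μ ^ 2 = 1 + 4 * g ^ 2 := by
        have := sub_eq_zero.1 h
        exact_mod_cast this
      have : |μ| = Real.sqrt (1 + 4 * g ^ 2) := by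
        rw [← hμ2, Real.sqrt_sq_eq_abs]
      linarith [neg_abs_le μ, this]
end

section
/- For the unit vector |E_0⟩ = (1/√N)[(2g+√(1+4g²))|++⟩ + |−−⟩] with N = 1 + (2g+√(1+4g²))², the maximal squared overlap with product states satisfies 1 − max_{unit product states φ⊗χ} |⟨E_0|φ⊗χ⟩|² = 1/2 − g/√(1+4g²), for g ≥ 0. -/
open scoped InnerProductSpace

set_option maxHeartbeats 1000000 in
/-- For the normalized Ising ground state
`|E0⟩ = (1/√N)[(2g+√(1+4g²))|++⟩ + |--⟩]`, `N = 1 + (2g+√(1+4g²))²`, the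
entanglement `1 - max_{product states} |⟨E0|φ⊗χ⟩|²` equals `1/2 - g/√(1+4g²)`. -/
theorem ising_ground_state_entanglement (g : ℝ) (hg : 0 ≤ g)
    (N : ℝ) (hN : N = 1 + (2 * g + Real.sqrt (1 + 4 * g ^ 2)) ^ 2)
    (plus minus : EuclideanSpace ℂ (Fin 2))
    (hplus : plus = ![((1 / Real.sqrt 2 : ℝ) : ℂ), ((1 / Real.sqrt 2 : ℝ) : ℂ)])
    (hminus : minus = ![((1 / Real.sqrt 2 : ℝ) : ℂ), ((-(1 / Real.sqrt 2) : ℝ) : ℂ)])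
    (E0 : EuclideanSpace ℂ (Fin 2 × Fin 2))
    (hE0 : E0 = WithLp.toLp 2 (fun p : Fin 2 × Fin 2 => ((1 / Real.sqrt N : ℝ) : ℂ) *
        (((2 * g + Real.sqrt (1 + 4 * g ^ 2) : ℝ) : ℂ) * (plus p.1 * plus p.2)
          + minus p.1 * minus p.2))) :
    1 - sSup {x : ℝ | ∃ φ χ : EuclideanSpace ℂ (Fin 2), ‖φ‖ = 1 ∧ ‖χ‖ = 1 ∧
        x = ‖⟪E0, (WithLp.toLp 2 (fun p : Fin 2 × Fin 2 => φ p.1 * χ p.2) : EuclideanSpace ℂ (Fin 2 × Fin 2))⟫_ℂ‖ ^ 2}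
      = 1 / 2 - g / Real.sqrt (1 + 4 * g ^ 2) := by
  have h2 : (0:ℝ) < Real.sqrt 2 := by positivity
  have h22 : Real.sqrt 2 * Real.sqrt 2 = 2 := Real.mul_self_sqrt (by norm_num)
  set s := Real.sqrt (1 + 4 * g ^ 2) with hsdef
  have hs2 : s ^ 2 = 1 + 4 * g ^ 2 := Real.sq_sqrt (by positivity)
  have hs0 : 0 ≤ s := Real.sqrt_nonneg _
  have hs1 : 1 ≤ s := by nlinarith
  set a := 2 * g + s with hadef
  have ha1 : 1 ≤ a := by simp only [hadef]; linarith
  have ha0 : 0 ≤ a := by linarith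
  have hNa : N = 1 + a ^ 2 := hN
  have hN0 : 0 < N := by nlinarith
  have hsN : 0 < Real.sqrt N := Real.sqrt_pos.2 hN0
  have hsN2 : Real.sqrt N ^ 2 = N := Real.sq_sqrt hN0.le
  have hnorm2 : ∀ ψ : EuclideanSpace ℂ (Fin 2), ‖ψ‖ = 1 → ‖ψ 0‖ ^ 2 + ‖ψ 1‖ ^ 2 = 1 := by
    intro ψ h
    have h2' : ‖ψ‖ ^ 2 = 1 := by rw [h]; norm_num
    rw [EuclideanSpace.norm_eq,
      Real.sq_sqrt (Finset.sum_nonneg fun i _ => sq_nonneg _)] at h2'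
    simpa [Fin.sum_univ_two] using h2'
  have hinner : ∀ φ χ : EuclideanSpace ℂ (Fin 2),
      ⟪E0, (WithLp.toLp 2 (fun p : Fin 2 × Fin 2 => φ p.1 * χ p.2) : EuclideanSpace ℂ (Fin 2 × Fin 2))⟫_ℂ
        = ((1 / Real.sqrt N : ℝ) : ℂ) *
          (((a : ℝ) : ℂ) * (((1 / Real.sqrt 2 : ℝ) : ℂ) * (φ 0 + φ 1))
              * (((1 / Real.sqrt 2 : ℝ) : ℂ) * (χ 0 + χ 1))
           + (((1 / Real.sqrt 2 : ℝ) : ℂ) * (φ 0 - φ 1))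
              * (((1 / Real.sqrt 2 : ℝ) : ℂ) * (χ 0 - χ 1))) := by
    intro φ χ
    simp only [hE0, hplus, hminus, PiLp.inner_apply, Fintype.sum_prod_type, Fin.sum_univ_two,
      Matrix.cons_val_zero, Matrix.cons_val_one, Matrix.head_cons, RCLike.inner_apply,
      map_mul, map_add, Complex.conj_ofReal]
    push_cast
    ring
  have hpar : ∀ ψ : EuclideanSpace ℂ (Fin 2), ‖ψ‖ = 1 →
      ‖((1 / Real.sqrt 2 : ℝ) : ℂ) * (ψ 0 + ψ 1)‖ ^ 2
        + ‖((1 / Real.sqrt 2 : ℝ) : ℂ) * (ψ 0 - ψ 1)‖ ^ 2 = 1 := by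
    intro ψ h
    have h' := hnorm2 ψ h
    have hp := parallelogram_law_with_norm ℂ (ψ 0) (ψ 1)
    have hc : ‖((1 / Real.sqrt 2 : ℝ) : ℂ)‖ ^ 2 = 1 / 2 := by
      rw [Complex.norm_real, Real.norm_eq_abs, abs_of_nonneg (by positivity),
        div_pow, one_pow, sq, h22]
    have hp' : ‖ψ 0 + ψ 1‖ ^ 2 + ‖ψ 0 - ψ 1‖ ^ 2 = 2 * (‖ψ 0‖ ^ 2 + ‖ψ 1‖ ^ 2) := by
      simpa [sq] using hp
    rw [norm_mul, norm_mul, mul_pow, mul_pow, hc]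
    linarith [hp']
  have key : ∀ u v w z : ℂ, ‖u‖ ^ 2 + ‖v‖ ^ 2 = 1 → ‖w‖ ^ 2 + ‖z‖ ^ 2 = 1 →
      ‖((a : ℝ) : ℂ) * u * w + v * z‖ ^ 2 ≤ a ^ 2 := by
    intro u v w z h1 h2'
    have hle : ‖((a : ℝ) : ℂ) * u * w + v * z‖ ≤ a * ‖u‖ * ‖w‖ + ‖v‖ * ‖z‖ := by
      calc ‖((a : ℝ) : ℂ) * u * w + v * z‖ ≤ ‖((a : ℝ) : ℂ) * u * w‖ + ‖v * z‖ :=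
            norm_add_le _ _
        _ = a * ‖u‖ * ‖w‖ + ‖v‖ * ‖z‖ := by
            rw [norm_mul, norm_mul, norm_mul, Complex.norm_real, Real.norm_eq_abs,
              abs_of_nonneg ha0]
    have h0 : (0:ℝ) ≤ ‖((a : ℝ) : ℂ) * u * w + v * z‖ := norm_nonneg _
    have hX2 : ‖((a : ℝ) : ℂ) * u * w + v * z‖ ^ 2
        ≤ (a * ‖u‖ * ‖w‖ + ‖v‖ * ‖z‖) ^ 2 := pow_le_pow_left₀ h0 hle 2
    refine hX2.trans ?_
    calc (a * ‖u‖ * ‖w‖ + ‖v‖ * ‖z‖) ^ 2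
        ≤ (a ^ 2 * ‖u‖ ^ 2 + ‖v‖ ^ 2) * (‖w‖ ^ 2 + ‖z‖ ^ 2) := by
          nlinarith [sq_nonneg (a * ‖u‖ * ‖z‖ - ‖v‖ * ‖w‖)]
      _ = a ^ 2 * ‖u‖ ^ 2 + ‖v‖ ^ 2 := by rw [h2', mul_one]
      _ ≤ a ^ 2 * (‖u‖ ^ 2 + ‖v‖ ^ 2) := by
          nlinarith [mul_nonneg (by nlinarith : (0:ℝ) ≤ a ^ 2 - 1) (sq_nonneg ‖v‖)]
      _ = a ^ 2 := by rw [h1, mul_one]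
  have hub : ∀ x ∈ {x : ℝ | ∃ φ χ : EuclideanSpace ℂ (Fin 2), ‖φ‖ = 1 ∧ ‖χ‖ = 1 ∧
      x = ‖⟪E0, (WithLp.toLp 2 (fun p : Fin 2 × Fin 2 => φ p.1 * χ p.2) : EuclideanSpace ℂ (Fin 2 × Fin 2))⟫_ℂ‖ ^ 2},
      x ≤ a ^ 2 / N := by
    rintro x ⟨φ, χ, hφ, hχ, rfl⟩
    rw [hinner φ χ, norm_mul, mul_pow]
    have hcn : ‖((1 / Real.sqrt N : ℝ) : ℂ)‖ ^ 2 = 1 / N := by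
      rw [Complex.norm_real, Real.norm_eq_abs, abs_of_nonneg (by positivity),
        div_pow, one_pow, hsN2]
    rw [hcn]
    have hk := key _ _ _ _ (hpar φ hφ) (hpar χ hχ)
    rw [div_mul_eq_mul_div, one_mul, div_le_div_iff₀ hN0 hN0]
    nlinarith [hk]
  have hplusnorm : ‖plus‖ = 1 := by
    have : ‖plus 0‖ ^ 2 + ‖plus 1‖ ^ 2 = 1 := by
      simp only [hplus, Matrix.cons_val_zero, Matrix.cons_val_one, Matrix.head_cons,
        Complex.norm_real, Real.norm_eq_abs]
      rw [abs_of_nonneg (by positivity), div_pow, one_pow, sq, h22]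
      norm_num
    rw [EuclideanSpace.norm_eq, Fin.sum_univ_two, this, Real.sqrt_one]
  have hmem : a ^ 2 / N ∈ {x : ℝ | ∃ φ χ : EuclideanSpace ℂ (Fin 2), ‖φ‖ = 1 ∧ ‖χ‖ = 1 ∧
      x = ‖⟪E0, (WithLp.toLp 2 (fun p : Fin 2 × Fin 2 => φ p.1 * χ p.2) : EuclideanSpace ℂ (Fin 2 × Fin 2))⟫_ℂ‖ ^ 2} := by
    refine ⟨plus, plus, hplusnorm, hplusnorm, ?_⟩
    rw [hinner plus plus]
    have hu : ((1 / Real.sqrt 2 : ℝ) : ℂ) * (plus 0 + plus 1) = 1 := by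
      simp only [hplus, Matrix.cons_val_zero, Matrix.cons_val_one, Matrix.head_cons]
      rw [← Complex.ofReal_add, ← Complex.ofReal_mul]
      norm_cast
      field_simp
      rw [Real.sq_sqrt (by norm_num)]; norm_num
    have hv : ((1 / Real.sqrt 2 : ℝ) : ℂ) * (plus 0 - plus 1) = 0 := by
      simp only [hplus, Matrix.cons_val_zero, Matrix.cons_val_one, Matrix.head_cons]
      ring
    rw [hu, hv]
    simp only [mul_one, mul_zero, zero_mul, add_zero]
    rw [← Complex.ofReal_mul, Complex.norm_real, Real.norm_eq_abs,
      abs_of_nonneg (by positivity), mul_pow, div_pow, one_pow, hsN2]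
    ring
  have hsup : sSup {x : ℝ | ∃ φ χ : EuclideanSpace ℂ (Fin 2), ‖φ‖ = 1 ∧ ‖χ‖ = 1 ∧
      x = ‖⟪E0, (WithLp.toLp 2 (fun p : Fin 2 × Fin 2 => φ p.1 * χ p.2) : EuclideanSpace ℂ (Fin 2 × Fin 2))⟫_ℂ‖ ^ 2}
      = a ^ 2 / N := by
    apply le_antisymm
    · exact csSup_le ⟨_, hmem⟩ hub
    · exact le_csSup ⟨a ^ 2 / N, hub⟩ hmem
  rw [hsup, hNa]
  have hs0' : 0 < s := lt_of_lt_of_le one_pos hs1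
  rw [hadef]
  field_simp
  ring_nf
  nlinarith [hs2, sq_nonneg s, hs0', hg]
end

section
/- Eigenspace perturbation bound (operator form): Let A = B + C with A and B normal operators on a finite-dimensional Hilbert space. Let a be an eigenvalue of A with P_a a projection onto a subspace of its eigenspace. Let β be a set of eigenvalues of B, with Q_b projections onto subspaces of the corresponding eigenspaces, Q = Σ_{b∈β} Q_b, and Δ_a = min_{b∈β} |a − b| > 0. Then |P_a Q|² ≤ |P_a C Q|²/Δ_a², where |S|² := S S†. -/
open Matrix ComplexOrder

/-- Real scalar multiplication on a complex matrix agrees with complex scalar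
multiplication by the coercion. -/
lemma real_smul_matrix {n : ℕ} (x : ℝ) (M : Matrix (Fin n) (Fin n) ℂ) :
    x • M = ((x : ℂ)) • M := by
  ext i j
  simp [Complex.real_smul]

/-- For a normal matrix `M`, `M * N = 0` implies `Mᴴ * N = 0`. -/
lemma normal_mul_eq_zero {n : ℕ} (M N : Matrix (Fin n) (Fin n) ℂ)
    (hM : M * Mᴴ = Mᴴ * M) (h : M * N = 0) : Mᴴ * N = 0 := by
  have key : (Mᴴ * N)ᴴ * (Mᴴ * N) = 0 := by
    calc (Mᴴ * N)ᴴ * (Mᴴ * N) = Nᴴ * (M * Mᴴ) * N := by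
          simp [conjTranspose_mul, Matrix.mul_assoc]
      _ = Nᴴ * Mᴴ * (M * N) := by rw [hM]; simp [Matrix.mul_assoc]
      _ = 0 := by rw [h, Matrix.mul_zero]
  exact conjTranspose_mul_self_eq_zero.mp key

/-- `(r : ℂ) • (Y * Yᴴ)` is positive semidefinite when `0 ≤ r`. -/
lemma psd_real_smul_mul_conjTranspose {n : ℕ} (Y : Matrix (Fin n) (Fin n) ℂ)
    (r : ℝ) (hr : 0 ≤ r) : (((r : ℂ)) • (Y * Yᴴ)).PosSemidef := by
  have : ((r : ℂ)) • (Y * Yᴴ) =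
      (((Real.sqrt r : ℂ)) • Y) * (((Real.sqrt r : ℂ)) • Y)ᴴ := by
    rw [conjTranspose_smul, Matrix.smul_mul, Matrix.mul_smul, smul_smul]
    congr 1
    rw [Complex.star_def, Complex.conj_ofReal, ← Complex.ofReal_mul,
      Real.mul_self_sqrt hr]
  rw [this]
  exact posSemidef_self_mul_conjTranspose _

/-- Eigenspace perturbation bound (operator form): `|P_a Q|² ≤ |P_a C Q|²/Δ_a²`
in the Loewner order, where `|S|² = S Sᴴ`, `Q = Σ_{b∈β} Q_b`, the `Q_b` are
mutually orthogonal projections onto subspaces of eigenspaces of `B`, `P_a`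
projects onto a subspace of the `a`-eigenspace of `A = B + C`, and
`Δ_a = min_{b∈β}|a-b| > 0`. -/
theorem eigenspace_perturbation_operator_bound {n : ℕ}
    (A B C : Matrix (Fin n) (Fin n) ℂ) (hsum : A = B + C)
    (hA : A * Aᴴ = Aᴴ * A) (hB : B * Bᴴ = Bᴴ * B)
    (a : ℂ)
    (P : Matrix (Fin n) (Fin n) ℂ)
    (hPH : P.IsHermitian) (hPidem : P * P = P) (hPa : A * P = a • P)
    (β : Finset ℂ)
    (Qf : ℂ → Matrix (Fin n) (Fin n) ℂ)
    (hQH : ∀ b ∈ β, (Qf b).IsHermitian)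
    (hQidem : ∀ b ∈ β, Qf b * Qf b = Qf b)
    (hQb : ∀ b ∈ β, B * Qf b = b • Qf b)
    (hQorth : ∀ b ∈ β, ∀ b' ∈ β, b ≠ b' → Qf b * Qf b' = 0)
    (Q : Matrix (Fin n) (Fin n) ℂ) (hQ : Q = ∑ b ∈ β, Qf b)
    (Δa : ℝ) (hΔa : 0 < Δa) (hΔmin : ∀ b ∈ β, Δa ≤ ‖a - b‖) :
    ((Δa ^ 2)⁻¹ • ((P * C * Q) * (P * C * Q)ᴴ) - (P * Q) * (P * Q)ᴴ).PosSemidef := by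
  classical
  -- Step 1: `P * A = a • P` since `A` is normal.
  set N : Matrix (Fin n) (Fin n) ℂ := A - a • (1 : Matrix (Fin n) (Fin n) ℂ) with hN
  have hNnorm : N * Nᴴ = Nᴴ * N := by
    simp only [hN, conjTranspose_sub, conjTranspose_smul, conjTranspose_one,
      Matrix.sub_mul, Matrix.mul_sub, Matrix.smul_mul, Matrix.mul_smul,
      Matrix.one_mul, Matrix.mul_one, hA, smul_smul, smul_sub]
    rw [mul_comm (star a) a]
    abel
  have hNP : N * P = 0 := by
    simp [hN, Matrix.sub_mul, hPa, Matrix.smul_mul]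
  have hNHP : Nᴴ * P = 0 := normal_mul_eq_zero N P hNnorm hNP
  have hAHP : Aᴴ * P = (star a) • P := by
    have h0 : (Aᴴ - (star a) • (1 : Matrix (Fin n) (Fin n) ℂ)) * P = 0 := by
      simpa [hN, conjTranspose_sub, conjTranspose_smul, conjTranspose_one] using hNHP
    rw [Matrix.sub_mul, Matrix.smul_mul, Matrix.one_mul, sub_eq_zero] at h0
    exact h0
  have hPA : P * A = a • P := by
    have := congrArg conjTranspose hAHP
    simpa [conjTranspose_mul, conjTranspose_smul, hPH.eq,
      conjTranspose_conjTranspose] using this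
  -- Step 2: `P * C * Qf b = (a - b) • (P * Qf b)`.
  have hC : C = A - B := by rw [hsum]; abel
  have hPCQb : ∀ b ∈ β, P * C * Qf b = (a - b) • (P * Qf b) := by
    intro b hb
    rw [hC, Matrix.mul_sub, Matrix.sub_mul, Matrix.mul_assoc P B (Qf b),
      hQb b hb, hPA, Matrix.smul_mul, Matrix.mul_smul, sub_smul]
  -- products of the projections
  set M : ℂ → Matrix (Fin n) (Fin n) ℂ := fun b => P * Qf b * P with hM
  have hQbH : ∀ b ∈ β, (P * Qf b)ᴴ = Qf b * P := by
    intro b hb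
    rw [conjTranspose_mul, hPH.eq, (hQH b hb).eq]
  have hMbb : ∀ b ∈ β, P * Qf b * (Qf b * P) = M b := by
    intro b hb
    rw [Matrix.mul_assoc P (Qf b) (Qf b * P), ← Matrix.mul_assoc (Qf b) (Qf b) P,
      hQidem b hb, ← Matrix.mul_assoc]
  have hZero : ∀ b' ∈ β, ∀ b ∈ β, b' ≠ b → P * Qf b' * (Qf b * P) = 0 := by
    intro b' hb' b hb hne
    rw [Matrix.mul_assoc P (Qf b') (Qf b * P), ← Matrix.mul_assoc (Qf b') (Qf b) P,
      hQorth b' hb' b hb hne, Matrix.zero_mul, Matrix.mul_zero]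
  -- Step 3: expansion of `X * Xᴴ` where `X = P * C * Q`.
  have hXX : (P * C * Q) * (P * C * Q)ᴴ
      = ∑ b ∈ β, ((a - b) * star (a - b)) • M b := by
    have hX : P * C * Q = ∑ b ∈ β, (a - b) • (P * Qf b) := by
      rw [hQ, Matrix.mul_sum]
      exact Finset.sum_congr rfl hPCQb
    rw [hX, conjTranspose_sum, Finset.sum_mul_sum]
    rw [Finset.sum_comm]
    refine Finset.sum_congr rfl fun b hb => ?_
    rw [Finset.sum_eq_single_of_mem b hb]
    · rw [conjTranspose_smul, hQbH b hb, Matrix.smul_mul, Matrix.mul_smul,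
        smul_smul, hMbb b hb]
    · intro b' hb' hne
      rw [conjTranspose_smul, hQbH b hb, Matrix.smul_mul, Matrix.mul_smul,
        hZero b' hb' b hb hne]
      simp
  -- Step 4: expansion of `(P * Q) * (P * Q)ᴴ`.
  have hPQ : (P * Q) * (P * Q)ᴴ = ∑ b ∈ β, M b := by
    have h1 : P * Q = ∑ b ∈ β, P * Qf b := by rw [hQ, Matrix.mul_sum]
    rw [h1, conjTranspose_sum, Finset.sum_mul_sum, Finset.sum_comm]
    refine Finset.sum_congr rfl fun b hb => ?_
    rw [Finset.sum_eq_single_of_mem b hb]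
    · rw [hQbH b hb, hMbb b hb]
    · intro b' hb' hne
      rw [hQbH b hb, hZero b' hb' b hb hne]
  -- Step 5: write the difference as a sum of PSD terms.
  rw [hXX, hPQ, Finset.smul_sum, ← Finset.sum_sub_distrib]
  have key : ∀ b ∈ β,
      ((Δa ^ 2)⁻¹ • (((a - b) * star (a - b)) • M b) - M b).PosSemidef := by
    intro b hb
    have hr0 : (0 : ℝ) ≤ (Δa ^ 2)⁻¹ * Complex.normSq (a - b) - 1 := by
      have h1 : Δa ^ 2 ≤ Complex.normSq (a - b) := by
        rw [← Complex.sq_norm]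
        exact pow_le_pow_left₀ hΔa.le (hΔmin b hb) 2
      have h2 : (1 : ℝ) ≤ (Δa ^ 2)⁻¹ * Complex.normSq (a - b) := by
        rw [← div_eq_inv_mul]
        exact (one_le_div (pow_pos hΔa 2)).mpr h1
      linarith
    have heq : (Δa ^ 2)⁻¹ • (((a - b) * star (a - b)) • M b) - M b
        = (((((Δa ^ 2)⁻¹ * Complex.normSq (a - b) - 1 : ℝ)) : ℂ))
            • ((P * Qf b) * (P * Qf b)ᴴ) := by
      have hMb : M b = (P * Qf b) * (P * Qf b)ᴴ := by
        rw [hQbH b hb, hMbb b hb]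
      rw [← hMb]
      have hstar : (a - b) * star (a - b) = (Complex.normSq (a - b) : ℂ) :=
        Complex.mul_conj _
      rw [hstar, real_smul_matrix, smul_smul]
      push_cast
      rw [sub_smul, one_smul]
    rw [heq]
    exact psd_real_smul_mul_conjTranspose _ _ hr0
  refine Finset.sum_induction _ _ (fun x y hx hy => hx.add hy) ?_ key
  exact Matrix.PosSemidef.zero
end

section
/- For any operators on a finite-dimensional Hilbert space, if P is an orthogonal projection and Q is a positive semidefinite contraction (0 ≤ Q ≤ I), then there exists a unitary U with P C Q C† P ≤ U C C† U†. -/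
open Matrix ComplexOrder

section
open scoped MatrixOrder

noncomputable def Matrix.PosSemidef.sqrt {n : ℕ} {Q : Matrix (Fin n) (Fin n) ℂ}
    (_hQ : Q.PosSemidef) : Matrix (Fin n) (Fin n) ℂ := CFC.sqrt Q

lemma Matrix.PosSemidef.posSemidef_sqrt {n : ℕ} {Q : Matrix (Fin n) (Fin n) ℂ}
    (hQ : Q.PosSemidef) : hQ.sqrt.PosSemidef :=
  (CFC.sqrt_nonneg Q).posSemidef

lemma Matrix.PosSemidef.sqrt_mul_self {n : ℕ} {Q : Matrix (Fin n) (Fin n) ℂ}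
    (hQ : Q.PosSemidef) : hQ.sqrt * hQ.sqrt = Q :=
  CFC.sqrt_mul_sqrt_self Q hQ.nonneg

end

lemma exists_unitary_conj {n : ℕ} (X : Matrix (Fin n) (Fin n) ℂ) :
    ∃ W ∈ Matrix.unitaryGroup (Fin n) ℂ, X * Xᴴ = W * (Xᴴ * X) * Wᴴ := by
  have hH : (Xᴴ * X).PosSemidef := Matrix.posSemidef_conjTranspose_mul_self X
  have hHerm := hH.1
  set Vm : Matrix (Fin n) (Fin n) ℂ := (hHerm.eigenvectorUnitary : Matrix (Fin n) (Fin n) ℂ) with hVm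
  set d : Fin n → ℝ := hHerm.eigenvalues with hd
  have hdnn : ∀ i, 0 ≤ d i := hH.eigenvalues_nonneg
  have hdiag : (star Vm) * (Xᴴ * X) * Vm = Matrix.diagonal (RCLike.ofReal ∘ d) :=
    by rw [← hHerm.conjStarAlgAut_star_eigenvectorUnitary, Unitary.conjStarAlgAut_apply]; simp [hVm]
  set Y : Matrix (Fin n) (Fin n) ℂ := X * Vm with hY
  have hVmem := hHerm.eigenvectorUnitary.2
  have hVst : (star Vm) * Vm = 1 := (Matrix.mem_unitaryGroup_iff').mp hVmem
  have hVst' : Vm * (star Vm) = 1 := (Matrix.mem_unitaryGroup_iff).mp hVmem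
  have hYdiag : Yᴴ * Y = Matrix.diagonal (RCLike.ofReal ∘ d) := by
    rw [← hdiag, hY, Matrix.conjTranspose_mul]
    simp only [← Matrix.star_eq_conjTranspose]
    noncomm_ring
  have hYentry : ∀ i j, (∑ k, star (Y k i) * Y k j) = if i = j then (d i : ℂ) else 0 := by
    intro i j
    have := congrFun (congrFun hYdiag i) j
    simpa [Matrix.mul_apply, Matrix.conjTranspose_apply, Matrix.diagonal_apply, eq_comm] using this
  -- zero columns where eigenvalue is zero
  have hYzero : ∀ i, d i = 0 → ∀ k, Y k i = 0 := by
    intro i hdi k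
    have h0 : (∑ k, star (Y k i) * Y k i) = 0 := by
      simpa [hdi] using hYentry i i
    have h1 : (∑ k, (Complex.normSq (Y k i) : ℝ)) = 0 := by
      have := congrArg Complex.re h0
      simpa [Complex.mul_conj', Complex.mul_conj, Complex.normSq_apply] using this
    have h2 : ∀ k ∈ Finset.univ, (0:ℝ) ≤ Complex.normSq (Y k i) := by
      intro k _; exact Complex.normSq_nonneg _
    have := (Finset.sum_eq_zero_iff_of_nonneg h2).mp h1 k (Finset.mem_univ k)
    exact Complex.normSq_eq_zero.mp this
  -- normalized columns
  set v : Fin n → EuclideanSpace ℂ (Fin n) :=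
    fun i => ((Real.sqrt (d i) : ℂ)⁻¹) • WithLp.toLp 2 (fun k => Y k i) with hv
  have hinner : ∀ i j, (inner ℂ (v i) (v j) : ℂ)
      = (Real.sqrt (d i) : ℂ)⁻¹ * (Real.sqrt (d j) : ℂ)⁻¹ * (if i = j then (d i : ℂ) else 0) := by
    intro i j
    rw [← hYentry i j]
    simp only [hv, PiLp.inner_apply, RCLike.inner_apply, starRingEnd_apply, Finset.mul_sum]
    refine Finset.sum_congr rfl fun k _ => ?_
    simp only [PiLp.smul_apply, Pi.smul_apply, smul_eq_mul, star_mul', star_inv₀,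
      Complex.star_def, Complex.conj_ofReal]
    ring
  have horth : Orthonormal ℂ (({i | d i ≠ 0} : Set (Fin n)).restrict v) := by
    rw [orthonormal_iff_ite]
    rintro ⟨i, hi⟩ ⟨j, hj⟩
    change inner ℂ (v i) (v j) = _
    rw [hinner i j]
    by_cases hij : i = j
    · subst hij
      simp only [if_pos rfl, Subtype.mk_eq_mk]
      have hsq : ((Real.sqrt (d i) : ℂ)) * ((Real.sqrt (d i) : ℂ)) = (d i : ℂ) := by
        rw [← Complex.ofReal_mul, Real.mul_self_sqrt (hdnn i)]
      have hne : ((Real.sqrt (d i) : ℂ)) ≠ 0 := by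
        simp only [ne_eq, Complex.ofReal_eq_zero]
        exact Real.sqrt_ne_zero'.mpr (lt_of_le_of_ne (hdnn i) (Ne.symm hi))
      field_simp
      rw [← hsq]
      simp [sq]
    · simp [hij, Subtype.mk_eq_mk]
  have hcard : Module.finrank ℂ (EuclideanSpace ℂ (Fin n)) = Fintype.card (Fin n) := by
    simp [finrank_euclideanSpace]
  obtain ⟨b, hb⟩ := horth.exists_orthonormalBasis_extension_of_card_eq hcard
  set W : Matrix (Fin n) (Fin n) ℂ := Matrix.of (fun k i => b i k) with hW
  have hWmem : W ∈ Matrix.unitaryGroup (Fin n) ℂ := by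
    rw [Matrix.mem_unitaryGroup_iff']
    ext i j
    have := orthonormal_iff_ite.mp b.orthonormal i j
    simp only [PiLp.inner_apply, RCLike.inner_apply, starRingEnd_apply] at this
    simpa [Matrix.mul_apply, Matrix.star_eq_conjTranspose, Matrix.conjTranspose_apply, hW,
      Matrix.one_apply, mul_comm] using this
  have hYW : Y = W * Matrix.diagonal (fun i => (Real.sqrt (d i) : ℂ)) := by
    ext k i
    rw [Matrix.mul_diagonal]
    by_cases hdi : d i = 0
    · simp [hYzero i hdi k, hdi]
    · have : b i = v i := hb i hdi
      rw [hW]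
      simp only [Matrix.of_apply, this, hv, PiLp.smul_apply, smul_eq_mul]
      have hne : ((Real.sqrt (d i) : ℂ)) ≠ 0 := by
        simp only [ne_eq, Complex.ofReal_eq_zero]
        exact Real.sqrt_ne_zero'.mpr (lt_of_le_of_ne (hdnn i) (Ne.symm hdi))
      field_simp
  refine ⟨W * (star Vm), mul_mem hWmem (Unitary.star_mem hVmem), ?_⟩
  have hXX : X * Xᴴ = Y * Yᴴ := by
    rw [hY, Matrix.conjTranspose_mul, ← Matrix.mul_assoc, Matrix.mul_assoc X Vm _,
      ← Matrix.star_eq_conjTranspose Vm, hVst', Matrix.mul_one]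
  have hdiagmul : Matrix.diagonal (fun i => (Real.sqrt (d i) : ℂ)) *
      (Matrix.diagonal (fun i => (Real.sqrt (d i) : ℂ)))ᴴ
      = Matrix.diagonal (RCLike.ofReal ∘ d) := by
    rw [Matrix.diagonal_conjTranspose, Matrix.diagonal_mul_diagonal]
    ext i j
    by_cases h : i = j
    · subst h
      simp only [Matrix.diagonal_apply_eq, Pi.star_apply, Complex.star_def, Complex.conj_ofReal,
        Function.comp_apply]
      rw [← Complex.ofReal_mul, Real.mul_self_sqrt (hdnn i)]
      rfl
    · simp [Matrix.diagonal_apply_ne _ h]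
  calc X * Xᴴ = Y * Yᴴ := hXX
    _ = W * (Matrix.diagonal (RCLike.ofReal ∘ d)) * Wᴴ := by
        rw [hYW, Matrix.conjTranspose_mul, ← hdiagmul]
        noncomm_ring
    _ = W * ((star Vm) * (Xᴴ * X) * Vm) * Wᴴ := by rw [hdiag]
    _ = W * star Vm * (Xᴴ * X) * (W * star Vm)ᴴ := by
        rw [show (W * star Vm)ᴴ = Vm * Wᴴ by
          rw [Matrix.conjTranspose_mul, Matrix.star_eq_conjTranspose Vm,
            Matrix.conjTranspose_conjTranspose]]
        noncomm_ring

/-- If `P` is an orthogonal projection and `0 ≤ Q ≤ I`, then there exists a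
unitary `U` with `P C Q Cᴴ P ≤ U C Cᴴ Uᴴ` in the Loewner order. -/
theorem projection_conjugate_le_unitary_conjugate {n : ℕ}
    (P C Q : Matrix (Fin n) (Fin n) ℂ)
    (hPH : P.IsHermitian) (hPidem : P * P = P)
    (hQ : Q.PosSemidef) (hQle : (1 - Q).PosSemidef) :
    ∃ U ∈ Matrix.unitaryGroup (Fin n) ℂ,
      (U * (C * Cᴴ) * Uᴴ - P * C * Q * Cᴴ * P).PosSemidef := by
  set S : Matrix (Fin n) (Fin n) ℂ := hQ.sqrt with hSdef
  have hS : Sᴴ = S := hQ.posSemidef_sqrt.1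
  set T : Matrix (Fin n) (Fin n) ℂ := hQle.sqrt with hTdef
  have hT : Tᴴ = T := hQle.posSemidef_sqrt.1
  set X : Matrix (Fin n) (Fin n) ℂ := P * C * S with hXdef
  set Y : Matrix (Fin n) (Fin n) ℂ := C * S with hYdef
  have eX : Xᴴ * X = S * Cᴴ * P * C * S := by
    calc Xᴴ * X = S * Cᴴ * (P * P) * C * S := by
          simp only [hXdef, Matrix.conjTranspose_mul, hS, hPH.eq]; noncomm_ring
      _ = S * Cᴴ * P * C * S := by rw [hPidem]
  have eY : Yᴴ * Y = S * Cᴴ * C * S := by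
    simp only [hYdef, Matrix.conjTranspose_mul, hS]; noncomm_ring
  have hXXH : X * Xᴴ = P * C * Q * Cᴴ * P := by
    calc X * Xᴴ = P * C * (S * S) * Cᴴ * P := by
          simp only [hXdef, Matrix.conjTranspose_mul, hS, hPH.eq]; noncomm_ring
      _ = P * C * Q * Cᴴ * P := by rw [hSdef, hQ.sqrt_mul_self]
  -- step 2 : Yᴴ Y - Xᴴ X is PSD
  set R : Matrix (Fin n) (Fin n) ℂ := (1 - P) * C * S with hRdef
  have hP1 : (1 - P)ᴴ = 1 - P := by
    rw [Matrix.conjTranspose_sub, Matrix.conjTranspose_one, hPH.eq]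
  have hP2 : (1 - P) * (1 - P) = 1 - P := by
    rw [sub_mul, one_mul, mul_sub, mul_one, hPidem]; abel
  have hR : Yᴴ * Y - Xᴴ * X = Rᴴ * R := by
    calc Yᴴ * Y - Xᴴ * X = S * Cᴴ * (1 - P) * C * S := by rw [eX, eY]; noncomm_ring
      _ = S * Cᴴ * ((1 - P) * (1 - P)) * C * S := by rw [hP2]
      _ = Rᴴ * R := by
          simp only [hRdef, Matrix.conjTranspose_mul, hP1, hS]; noncomm_ring
  have hstep2 : (Yᴴ * Y - Xᴴ * X).PosSemidef := by
    rw [hR]; exact Matrix.posSemidef_conjTranspose_mul_self R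
  -- step 4 : C Cᴴ - Y Yᴴ is PSD
  have hYY : Y * Yᴴ = C * Q * Cᴴ := by
    calc Y * Yᴴ = C * (S * S) * Cᴴ := by
          simp only [hYdef, Matrix.conjTranspose_mul, hS]; noncomm_ring
      _ = C * Q * Cᴴ := by rw [hSdef, hQ.sqrt_mul_self]
  have hCT : C * Cᴴ - Y * Yᴴ = (C * T) * (C * T)ᴴ := by
    calc C * Cᴴ - Y * Yᴴ = C * (1 - Q) * Cᴴ := by rw [hYY]; noncomm_ring
      _ = C * (T * T) * Cᴴ := by rw [hTdef, hQle.sqrt_mul_self]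
      _ = (C * T) * (C * T)ᴴ := by
          simp only [Matrix.conjTranspose_mul, hT]; noncomm_ring
  have hstep4 : (C * Cᴴ - Y * Yᴴ).PosSemidef := by
    rw [hCT]; exact Matrix.posSemidef_self_mul_conjTranspose (C * T)
  obtain ⟨U1, hU1mem, hU1⟩ := exists_unitary_conj X
  obtain ⟨U2, hU2mem, hU2⟩ := exists_unitary_conj Yᴴ
  rw [Matrix.conjTranspose_conjTranspose] at hU2
  -- hU2 : Yᴴ * Y = U2 * (Y * Yᴴ) * U2ᴴ
  refine ⟨U1 * U2, mul_mem hU1mem hU2mem, ?_⟩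
  have key : U1 * U2 * (C * Cᴴ) * (U1 * U2)ᴴ - P * C * Q * Cᴴ * P
      = U1 * (U2 * (C * Cᴴ - Y * Yᴴ) * U2ᴴ) * U1ᴴ + U1 * (Yᴴ * Y - Xᴴ * X) * U1ᴴ := by
    have h1 : P * C * Q * Cᴴ * P = U1 * (Xᴴ * X) * U1ᴴ := by rw [← hXXH, hU1]
    rw [Matrix.conjTranspose_mul, h1, hU2]
    noncomm_ring
  rw [key]
  exact ((hstep4.mul_mul_conjTranspose_same U2).mul_mul_conjTranspose_same U1).add
    ((hstep2).mul_mul_conjTranspose_same U1)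
end

section
/- Davis–Kahan-type norm bound for a single eigenvalue: Let A = B + C with A, B normal on a finite-dimensional Hilbert space, a an eigenvalue of A with unit eigenvector |a⟩ and P = |a⟩⟨a|, and let Q project onto the span of eigenvectors of B whose eigenvalues b all satisfy |a − b| ≥ Δ > 0. Then ‖P Q‖ ≤ ‖C‖/Δ, where ‖·‖ is the operator norm. -/
open scoped InnerProductSpace

/-- For a normal operator, an eigenvector is also an eigenvector of the
adjoint with conjugate eigenvalue. -/
private lemma adjoint_eigen_of_normal
    {E : Type*} [NormedAddCommGroup E] [InnerProductSpace ℂ E] [FiniteDimensional ℂ E]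
    (B : E →L[ℂ] E)
    (hB : B ∘L ContinuousLinearMap.adjoint B = ContinuousLinearMap.adjoint B ∘L B)
    (b : ℂ) (w : E) (hw : B w = b • w) :
    ContinuousLinearMap.adjoint B w = (starRingEnd ℂ b) • w := by
  have key : ⟪ContinuousLinearMap.adjoint B w - (starRingEnd ℂ b) • w,
      ContinuousLinearMap.adjoint B w - (starRingEnd ℂ b) • w⟫_ℂ = 0 := by
    have h1 : ⟪ContinuousLinearMap.adjoint B w, ContinuousLinearMap.adjoint B w⟫_ℂ
        = (starRingEnd ℂ b) * b * ⟪w, w⟫_ℂ := by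
      have hswap : ⟪w, B (ContinuousLinearMap.adjoint B w)⟫_ℂ
          = ⟪w, ContinuousLinearMap.adjoint B (B w)⟫_ℂ := by
        have := congrArg (fun T => ⟪w, T w⟫_ℂ) hB
        simpa using this
      rw [ContinuousLinearMap.adjoint_inner_left, hswap,
        ContinuousLinearMap.adjoint_inner_right, hw, inner_smul_left, inner_smul_right]
      ring
    have h2 : ⟪ContinuousLinearMap.adjoint B w, (starRingEnd ℂ b) • w⟫_ℂ
        = (starRingEnd ℂ b) * b * ⟪w, w⟫_ℂ := by
      rw [inner_smul_right, ContinuousLinearMap.adjoint_inner_left, hw, inner_smul_right]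
      ring
    have h3 : ⟪(starRingEnd ℂ b) • w, ContinuousLinearMap.adjoint B w⟫_ℂ
        = (starRingEnd ℂ b) * b * ⟪w, w⟫_ℂ := by
      rw [inner_smul_left, ContinuousLinearMap.adjoint_inner_right, hw, inner_smul_left]
      simp only [RingHom.id_apply, RingHomCompTriple.comp_apply, Complex.conj_conj]
      ring
    have h4 : ⟪(starRingEnd ℂ b) • w, (starRingEnd ℂ b) • w⟫_ℂ
        = (starRingEnd ℂ b) * b * ⟪w, w⟫_ℂ := by
      rw [inner_smul_left, inner_smul_right]
      simp only [Complex.conj_conj]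
      ring
    rw [inner_sub_left, inner_sub_right, inner_sub_right, h1, h2, h3, h4]
    ring
  exact sub_eq_zero.mp (inner_self_eq_zero.mp key)

/-- Davis–Kahan-type norm bound for a single eigenvalue: if `A = B + C` with
`A`, `B` normal, `|a⟩` a unit eigenvector of `A` with eigenvalue `a`,
`P = |a⟩⟨a|`, and `Q` the projection onto a span of eigenvectors of `B` whose
eigenvalues `b` all satisfy `|a - b| ≥ Δ > 0`, then `‖P Q‖ ≤ ‖C‖/Δ`. -/
theorem davis_kahan_norm_bound
    {E : Type*} [NormedAddCommGroup E] [InnerProductSpace ℂ E] [FiniteDimensional ℂ E]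
    (A B C : E →L[ℂ] E) (hsum : A = B + C)
    (hA : A ∘L ContinuousLinearMap.adjoint A = ContinuousLinearMap.adjoint A ∘L A)
    (hB : B ∘L ContinuousLinearMap.adjoint B = ContinuousLinearMap.adjoint B ∘L B)
    (a : ℂ) (v : E) (hv : ‖v‖ = 1) (hva : A v = a • v)
    (P : E →L[ℂ] E) (hP : ∀ w, P w = ⟪v, w⟫_ℂ • v)
    (Δ : ℝ) (hΔ : 0 < Δ)
    (β : Finset ℂ) (hβ : ∀ b ∈ β, Δ ≤ ‖a - b‖)
    (Qf : ℂ → E →L[ℂ] E)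
    (hQsa : ∀ b ∈ β, IsSelfAdjoint (Qf b))
    (hQidem : ∀ b ∈ β, Qf b ∘L Qf b = Qf b)
    (hQrange : ∀ b ∈ β, LinearMap.range (Qf b : E →ₗ[ℂ] E) ≤
        Module.End.eigenspace (B : E →ₗ[ℂ] E) b)
    (hQorth : ∀ b ∈ β, ∀ b' ∈ β, b ≠ b' → Qf b ∘L Qf b' = 0)
    (Q : E →L[ℂ] E) (hQ : Q = ∑ b ∈ β, Qf b) :
    ‖P ∘L Q‖ ≤ ‖C‖ / Δ := by
  classical
  set u : E := Q v with hu
  -- Q is self-adjoint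
  have hQsaQ : IsSelfAdjoint Q := by
    rw [hQ]
    exact Finset.sum_induction _ _ (fun x y hx hy => hx.add hy) (star_zero _) hQsa
  -- nonzero denominators
  have hab : ∀ b ∈ β, a - b ≠ 0 := by
    intro b hb
    have := lt_of_lt_of_le hΔ (hβ b hb)
    intro h; rw [h, norm_zero] at this; linarith
  -- adjoint of Qf b is itself, rewriting tool
  have hsaflip : ∀ b ∈ β, ∀ x y : E, ⟪Qf b x, y⟫_ℂ = ⟪x, Qf b y⟫_ℂ := by
    intro b hb x y
    conv_lhs => rw [← (hQsa b hb).star_eq]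
    rw [ContinuousLinearMap.star_eq_adjoint, ContinuousLinearMap.adjoint_inner_left]
  -- orthogonality of components
  have horth : ∀ b ∈ β, ∀ b' ∈ β, b ≠ b' → ⟪Qf b v, Qf b' v⟫_ℂ = 0 := by
    intro b hb b' hb' hne
    rw [hsaflip b hb]
    have hz : Qf b (Qf b' v) = 0 := by
      have := congrArg (fun T : E →L[ℂ] E => T v) (hQorth b hb b' hb' hne)
      simpa using this
    rw [hz, inner_zero_right]
  -- each component is an eigenvector of B
  have hBe : ∀ b ∈ β, B (Qf b v) = b • Qf b v := by
    intro b hb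
    have hm : Qf b v ∈ Module.End.eigenspace (B : E →ₗ[ℂ] E) b :=
      hQrange b hb ⟨v, rfl⟩
    simpa using Module.End.mem_eigenspace_iff.mp hm
  -- C v in terms of a and B
  have hCv : C v = a • v - B v := by
    have : C = A - B := by rw [hsum]; abel
    rw [this]; simp [hva]
  -- the key identity
  have hkey : ∀ b ∈ β, ⟪Qf b v, C v⟫_ℂ = (a - b) * ⟪Qf b v, Qf b v⟫_ℂ := by
    intro b hb
    have hiv : ⟪Qf b v, v⟫_ℂ = ⟪Qf b v, Qf b v⟫_ℂ := by
      conv_lhs => rw [← hQidem b hb]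
      rw [ContinuousLinearMap.comp_apply, ← hsaflip b hb]
    have hBv : ⟪Qf b v, B v⟫_ℂ = b * ⟪Qf b v, Qf b v⟫_ℂ := by
      rw [← ContinuousLinearMap.adjoint_inner_left,
        adjoint_eigen_of_normal B hB b (Qf b v) (hBe b hb), inner_smul_left,
        Complex.conj_conj, hiv]
    rw [hCv, inner_sub_right, inner_smul_right, hiv, hBv]
    ring
  -- decomposition of u
  have huv : u = ∑ b ∈ β, Qf b v := by
    rw [hu, hQ]; simp [ContinuousLinearMap.sum_apply]
  -- norm squared of u
  have hS : (‖u‖ : ℝ) ^ 2 = ∑ b ∈ β, ‖Qf b v‖ ^ 2 := by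
    have h1 : ⟪u, u⟫_ℂ = ∑ b ∈ β, ⟪Qf b v, Qf b v⟫_ℂ := by
      rw [huv, sum_inner]
      refine Finset.sum_congr rfl fun b hb => ?_
      rw [inner_sum]
      exact Finset.sum_eq_single_of_mem b hb fun b' hb' hne =>
        horth b hb b' hb' (Ne.symm hne)
    rw [norm_sq_eq_re_inner (𝕜 := ℂ) u, h1, map_sum]
    exact Finset.sum_congr rfl fun b _ => (norm_sq_eq_re_inner (𝕜 := ℂ) _).symm
  -- the test vector
  set w : E := ∑ b ∈ β, (starRingEnd ℂ (a - b))⁻¹ • Qf b v with hw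
  -- inner product with C v picks up the sum of squares
  have hwC : ⟪w, C v⟫_ℂ = ((∑ b ∈ β, ‖Qf b v‖ ^ 2 : ℝ) : ℂ) := by
    rw [hw, sum_inner]
    push_cast
    refine Finset.sum_congr rfl fun b hb => ?_
    rw [inner_smul_left, hkey b hb, map_inv₀, Complex.conj_conj,
      inner_self_eq_norm_sq_to_K]
    field_simp [hab b hb]
    rfl
  -- norm of w
  have hwn : ‖w‖ ^ 2 ≤ Δ⁻¹ ^ 2 * ∑ b ∈ β, ‖Qf b v‖ ^ 2 := by
    have h1 : ⟪w, w⟫_ℂ = ∑ b ∈ β, ⟪(starRingEnd ℂ (a - b))⁻¹ • Qf b v,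
        (starRingEnd ℂ (a - b))⁻¹ • Qf b v⟫_ℂ := by
      rw [hw, sum_inner]
      refine Finset.sum_congr rfl fun b hb => ?_
      rw [inner_sum]
      refine Finset.sum_eq_single_of_mem b hb fun b' hb' hne => ?_
      rw [inner_smul_left, inner_smul_right, horth b hb b' hb' (Ne.symm hne)]
      ring
    have h2 : ‖w‖ ^ 2 = ∑ b ∈ β, ‖(starRingEnd ℂ (a - b))⁻¹‖ ^ 2 * ‖Qf b v‖ ^ 2 := by
      rw [norm_sq_eq_re_inner (𝕜 := ℂ) w, h1, map_sum]
      refine Finset.sum_congr rfl fun b hb => ?_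
      rw [← norm_sq_eq_re_inner (𝕜 := ℂ), norm_smul, mul_pow]
    rw [h2, Finset.mul_sum]
    refine Finset.sum_le_sum fun b hb => ?_
    have hle : ‖(starRingEnd ℂ (a - b))⁻¹‖ ≤ Δ⁻¹ := by
      rw [norm_inv, RCLike.norm_conj]
      exact inv_anti₀ hΔ (hβ b hb)
    have hsq : ‖(starRingEnd ℂ (a - b))⁻¹‖ ^ 2 ≤ Δ⁻¹ ^ 2 :=
      pow_le_pow_left₀ (norm_nonneg _) hle 2
    exact mul_le_mul_of_nonneg_right hsq (sq_nonneg _)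
  -- main estimate
  have hSnn : (0 : ℝ) ≤ ∑ b ∈ β, ‖Qf b v‖ ^ 2 :=
    Finset.sum_nonneg fun b _ => sq_nonneg _
  have hw1 : ‖w‖ ≤ Δ⁻¹ * ‖u‖ := by
    have hsq : ‖w‖ ^ 2 ≤ (Δ⁻¹ * ‖u‖) ^ 2 := by
      rw [mul_pow, hS]
      exact hwn
    calc ‖w‖ = Real.sqrt (‖w‖ ^ 2) := (Real.sqrt_sq (norm_nonneg _)).symm
      _ ≤ Real.sqrt ((Δ⁻¹ * ‖u‖) ^ 2) := Real.sqrt_le_sqrt hsq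
      _ = Δ⁻¹ * ‖u‖ := Real.sqrt_sq (mul_nonneg (inv_nonneg.mpr hΔ.le) (norm_nonneg _))
  have hmain : ‖u‖ ^ 2 ≤ Δ⁻¹ * ‖u‖ * ‖C‖ := by
    have hCvle : ‖C v‖ ≤ ‖C‖ := by
      have h := C.le_opNorm v
      rw [hv, mul_one] at h
      exact h
    calc ‖u‖ ^ 2 = ∑ b ∈ β, ‖Qf b v‖ ^ 2 := hS
      _ = ‖⟪w, C v⟫_ℂ‖ := by rw [hwC, Complex.norm_real, Real.norm_of_nonneg hSnn]
      _ ≤ ‖w‖ * ‖C v‖ := norm_inner_le_norm _ _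
      _ ≤ (Δ⁻¹ * ‖u‖) * ‖C‖ :=
          mul_le_mul hw1 hCvle (norm_nonneg _) (mul_nonneg (inv_nonneg.mpr hΔ.le) (norm_nonneg _))
      _ = Δ⁻¹ * ‖u‖ * ‖C‖ := by ring
  have hfin : ‖u‖ ≤ ‖C‖ / Δ := by
    rcases eq_or_ne ‖u‖ 0 with h0 | h0
    · rw [h0]; exact div_nonneg (norm_nonneg _) hΔ.le
    · have hpos : 0 < ‖u‖ := lt_of_le_of_ne (norm_nonneg _) (Ne.symm h0)
      have : ‖u‖ * ‖u‖ ≤ (‖C‖ / Δ) * ‖u‖ := by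
        have := hmain
        rw [pow_two] at this
        calc ‖u‖ * ‖u‖ ≤ Δ⁻¹ * ‖u‖ * ‖C‖ := this
          _ = (‖C‖ / Δ) * ‖u‖ := by rw [div_eq_mul_inv]; ring
      exact le_of_mul_le_mul_right this hpos
  -- conclude
  refine le_trans (ContinuousLinearMap.opNorm_le_bound _ (norm_nonneg u) fun x => ?_) hfin
  rw [ContinuousLinearMap.comp_apply, hP, norm_smul, hv, mul_one]
  have hinner : ⟪v, Q x⟫_ℂ = ⟪u, x⟫_ℂ := by
    conv_lhs => rw [← hQsaQ.star_eq]
    rw [ContinuousLinearMap.star_eq_adjoint, ContinuousLinearMap.adjoint_inner_right, hu]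
  rw [hinner]
  exact norm_inner_le_norm u x
end

section
/- Bound on excited-state overlap: Let H = H_L + H_I be Hermitian, |E_j⟩ a unit eigenvector of H with eigenvalue E_j, and K a subspace spanned by eigenvectors of H_L. Let Q_⊥ be the projection onto the orthogonal complement of K within the span of the remaining eigenvectors of H_L, and suppose every eigenvalue E^L_l of H_L with eigenvector outside K satisfies |E_j − E^L_l| ≥ Δ > 0. Then ‖Q_⊥|E_j⟩‖ ≤ ‖H_I‖/Δ. -/
/-- Bound on excited-state overlap: if `|E_j⟩` is a unit eigenvector of
`H = H_L + H_I` with eigenvalue `E_j`, `K` is a direct sum of eigenspaces of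
`H_L` (those with eigenvalues in the set `S`), `Q_⊥` the orthogonal projection
onto the sum of the remaining eigenspaces of `H_L`, and every eigenvalue
`E^L_l ∉ S` of `H_L` satisfies `|E_j − E^L_l| ≥ Δ > 0`, then
`‖Q_⊥|E_j⟩‖ ≤ ‖H_I‖/Δ`. -/
theorem excited_state_overlap_bound
    {E : Type*} [NormedAddCommGroup E] [InnerProductSpace ℂ E] [FiniteDimensional ℂ E]
    (H HL HI : E →L[ℂ] E)
    (hH : IsSelfAdjoint H) (hHL : IsSelfAdjoint HL) (hHI : IsSelfAdjoint HI)
    (hsum : H = HL + HI)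
    (Ej : ℝ) (v : E) (hv : ‖v‖ = 1) (hvE : H v = (Ej : ℂ) • v)
    (S : Set ℝ)
    (K Kc : Submodule ℂ E)
    (hK : K = ⨆ (μ : ℝ) (_ : μ ∈ S), Module.End.eigenspace (HL : E →ₗ[ℂ] E) (μ : ℂ))
    (hKc : Kc = ⨆ (μ : ℝ) (_ : μ ∉ S), Module.End.eigenspace (HL : E →ₗ[ℂ] E) (μ : ℂ))
    (Δ : ℝ) (hΔ : 0 < Δ)
    (hfar : ∀ μ : ℝ, μ ∉ S →
      Module.End.HasEigenvalue (HL : E →ₗ[ℂ] E) (μ : ℂ) → Δ ≤ |Ej - μ|) :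
    ‖(Submodule.orthogonalProjection Kc v : E)‖ ≤ ‖HI‖ / Δ := by
  have hsym : (HL : E →ₗ[ℂ] E).IsSymmetric := hHL.isSymmetric
  set q : E := (Submodule.orthogonalProjection Kc v : E) with hqdef
  have hqmem : q ∈ Kc := (Submodule.orthogonalProjection Kc v).2
  -- HL maps Kc into Kc
  have hinv : ∀ x ∈ Kc, HL x ∈ Kc := by
    intro x hx
    have hle : Kc ≤ Submodule.comap (HL : E →ₗ[ℂ] E) Kc := by
      conv_lhs => rw [hKc]
      refine iSup_le fun μ => iSup_le fun hμ => ?_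
      intro y hy
      have hy' : HL y = (μ : ℂ) • y := Module.End.mem_eigenspace_iff.mp hy
      have hyKc : y ∈ Kc := by
        rw [hKc]
        have hle2 : Module.End.eigenspace (HL : E →ₗ[ℂ] E) (μ : ℂ) ≤
            ⨆ (ν : ℝ) (_ : ν ∉ S), Module.End.eigenspace (HL : E →ₗ[ℂ] E) (ν : ℂ) :=
          le_iSup₂ (f := fun (ν : ℝ) (_ : ν ∉ S) =>
            Module.End.eigenspace (HL : E →ₗ[ℂ] E) (ν : ℂ)) μ hμ
        exact hle2 hy
      simpa [Submodule.mem_comap, hy'] using Kc.smul_mem (μ : ℂ) hyKc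
    exact hle hx
  -- set up eigenbasis
  set n := Module.finrank ℂ E with hn
  set b := hsym.eigenvectorBasis rfl with hb
  set lam := hsym.eigenvalues (n := n) rfl with hlam
  -- coefficients of q vanish on eigenvalues in S
  have hcoef : ∀ i : Fin n, lam i ∈ S → b.repr q i = 0 := by
    intro i hiS
    rw [b.repr_apply_apply]
    -- show b i ⟂ Kc
    have : Kc ≤ LinearMap.ker ((innerSL ℂ (b i) : E →L[ℂ] ℂ) : E →ₗ[ℂ] ℂ) := by
      rw [hKc]
      refine iSup_le fun μ => iSup_le fun hμ => ?_
      intro y hy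
      have hy' : HL y = (μ : ℂ) • y := Module.End.mem_eigenspace_iff.mp hy
      have hbi : HL (b i) = (lam i : ℂ) • b i := hsym.apply_eigenvectorBasis rfl i
      have hsy := hsym (b i) y
      have hne : (lam i : ℂ) ≠ (μ : ℂ) := by
        simp only [Ne, Complex.ofReal_inj]
        rintro rfl; exact hμ hiS
      simp only [LinearMap.mem_ker, ContinuousLinearMap.coe_coe, innerSL_apply_apply]
      rw [ContinuousLinearMap.coe_coe] at *
      rw [hbi, hy'] at hsy
      rw [inner_smul_left, inner_smul_right] at hsy
      have : ((lam i : ℂ) - μ) * inner ℂ (b i) y = 0 := by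
        rw [sub_mul]
        rw [Complex.conj_ofReal] at hsy
        rw [hsy]; ring
      rcases mul_eq_zero.mp this with h | h
      · exact absurd (sub_eq_zero.mp h) hne
      · exact h
    simpa using this hqmem
  -- define u
  set u : E := HL q - (Ej : ℂ) • q with hu
  -- repr of u
  have hrepru : ∀ i : Fin n, b.repr u i = ((lam i : ℂ) - Ej) * b.repr q i := by
    intro i
    rw [hu]
    rw [map_sub, map_smul]
    have := hsym.eigenvectorBasis_apply_self_apply rfl q i
    simp only [ContinuousLinearMap.coe_coe] at this
    simp [this, hb, hlam]
    ring
  -- lower bound: Δ^2 * ‖q‖^2 ≤ ‖u‖^2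
  have hnorm_sq : ∀ x : E, ‖x‖ ^ 2 = ∑ i : Fin n, ‖b.repr x i‖ ^ 2 := by
    intro x
    have h1 : ‖b.repr x‖ = ‖x‖ := b.repr.norm_map x
    rw [← h1, EuclideanSpace.norm_eq, Real.sq_sqrt (Finset.sum_nonneg fun i _ => sq_nonneg _)]
  have hlow : Δ ^ 2 * ‖q‖ ^ 2 ≤ ‖u‖ ^ 2 := by
    rw [hnorm_sq q, hnorm_sq u, Finset.mul_sum]
    refine Finset.sum_le_sum fun i _ => ?_
    by_cases hiS : lam i ∈ S
    · simp [hcoef i hiS]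
    · have h1 : ‖b.repr u i‖ = |lam i - Ej| * ‖b.repr q i‖ := by
        rw [hrepru i, norm_mul]
        congr 1
        rw [show ((lam i : ℂ) - Ej) = ((lam i - Ej : ℝ) : ℂ) by push_cast; ring,
          Complex.norm_real, Real.norm_eq_abs]
      have h2 : Δ ≤ |lam i - Ej| := by
        rw [abs_sub_comm]
        exact hfar (lam i) hiS (hsym.hasEigenvalue_eigenvalues rfl i)
      rw [h1, mul_pow]
      exact mul_le_mul_of_nonneg_right (by nlinarith [abs_nonneg (lam i - Ej)])
        (sq_nonneg _)
  -- u is the projection of HL v - Ej v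
  have humem : u ∈ Kc := Kc.sub_mem (hinv q hqmem) (Kc.smul_mem _ hqmem)
  have hproj : (Submodule.orthogonalProjection Kc (HL v - (Ej : ℂ) • v) : E) = u := by
    refine Submodule.eq_starProjection_of_mem_of_inner_eq_zero humem fun z hz => ?_
    have hdiff : HL v - (Ej : ℂ) • v - u = HL (v - q) - (Ej : ℂ) • (v - q) := by
      rw [hu]; rw [map_sub]; module
    rw [hdiff, inner_sub_left, inner_smul_left]
    have hvq : v - q ∈ Kcᗮ := Submodule.sub_starProjection_mem_orthogonal v
    have h1 : (inner ℂ (HL (v - q)) z : ℂ) = inner ℂ (v - q) (HL z) := hsym (v - q) z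
    have h2 : (inner ℂ (v - q) (HL z) : ℂ) = 0 :=
      (Submodule.mem_orthogonal' Kc _).mp hvq (HL z) (hinv z hz)
    have h3 : (inner ℂ (v - q) z : ℂ) = 0 :=
      (Submodule.mem_orthogonal' Kc _).mp hvq z hz
    rw [h1, h2, h3]
    ring
  -- ‖u‖ ≤ ‖HI‖
  have hHLv : HL v - (Ej : ℂ) • v = -(HI v) := by
    have h : HL v + HI v = (Ej : ℂ) • v := by rw [← hvE, hsum]; rfl
    rw [← h]; abel
  have hub : ‖u‖ ≤ ‖HI‖ := by
    rw [← hproj, hHLv]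
    have h1 : ‖(Submodule.orthogonalProjection Kc (-(HI v)) : E)‖ ≤ ‖-(HI v)‖ := by
      have := (Submodule.orthogonalProjection Kc).le_of_opNorm_le (Submodule.orthogonalProjection_norm_le Kc)
        (-(HI v))
      simpa using this
    refine h1.trans ?_
    rw [norm_neg]
    calc ‖HI v‖ ≤ ‖HI‖ * ‖v‖ := HI.le_opNorm v
      _ = ‖HI‖ := by rw [hv, mul_one]
  rw [le_div_iff₀ hΔ]
  nlinarith [norm_nonneg q, norm_nonneg u, hlow, hub, mul_nonneg (norm_nonneg q) hΔ.le]
end
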